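/- arXiv:1303.0676 — 6 statements merged into one kernel-verified Lean document; each statement's English description precedes it below -/
import Mathlib

section
/- Let k be a natural number, p a natural number with p < k/(α-1) where α > 1, and f(z) = z^(-p) on the punctured unit disk. Then |f^(k)(z)|/(1 + |f(z)|^α) tends to ∞ as z → 0. -/
open Filter Topology

/-! Since `f⁽ᵏ⁾(z) = c z^(-p-k)` with `c = (-p)(-p-1)⋯(-p-k+1) ≠ 0`, near `0` the quotient is
comparable to `|z|^(-p-k) / |z|^(-pα) = |z|^(pα-p-k)`, and the exponent `pα - p - k` is negative
exactly when `p < k/(α-1)`. -/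

lemma prod_range_intCast_sub_ne_zero {R : Type*} [CommRing R] [IsDomain R] [CharZero R]
    {m : ℤ} (hm : m < 0) (k : ℕ) : ∏ i ∈ Finset.range k, ((m : R) - i) ≠ 0 := by
  refine Finset.prod_ne_zero_iff.mpr fun i _ h => ?_
  have : m - i = 0 := by exact_mod_cast h
  omega

lemma norm_iteratedDeriv_zpow {𝕜 : Type*} [NontriviallyNormedField 𝕜] (m : ℤ) (k : ℕ)
    (z : 𝕜) :
    ‖iteratedDeriv k (fun w : 𝕜 => w ^ m) z‖ =
      ‖∏ i ∈ Finset.range k, ((m : 𝕜) - i)‖ * ‖z‖ ^ (m - k) := by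
  rw [iteratedDeriv_eq_iterate, iter_deriv_zpow, norm_mul, norm_zpow]

lemma tendsto_norm_rpow_nhdsNE_zero_atTop {E : Type*} [NormedAddCommGroup E] {e : ℝ}
    (he : e < 0) : Tendsto (fun z : E => ‖z‖ ^ e) (𝓝[≠] 0) atTop :=
  (tendsto_rpow_neg_nhdsGT_zero he).comp tendsto_norm_nhdsNE_zero

lemma Real.rpow_sub_div_two_le_div_one_add_rpow_neg {r a b : ℝ} (hr₀ : 0 < r)
    (hr₁ : r ≤ 1) (ha : 0 ≤ a) : r ^ (a - b) / 2 ≤ r ^ (-b) / (1 + r ^ (-a)) := by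
  have h₁ : 1 ≤ r ^ (-a) := one_le_rpow_of_pos_of_le_one_of_nonpos hr₀ hr₁ (by linarith)
  calc r ^ (a - b) / 2 = r ^ (-b) / (2 * r ^ (-a)) := by
        rw [show a - b = -b - -a by ring, rpow_sub hr₀, div_div, mul_comm]
    _ ≤ r ^ (-b) / (1 + r ^ (-a)) := by gcongr; linarith

theorem stmt_2_general (k p : ℕ) (hp : 1 ≤ p) (α : ℝ) (hα : 1 < α)
    (hpk : (p : ℝ) < (k : ℝ) / (α - 1)) :
    Tendsto (fun z : ℂ =>
        ‖iteratedDeriv k (fun w : ℂ => w ^ (-(p : ℤ))) z‖ /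
          (1 + ‖z ^ (-(p : ℤ))‖ ^ α))
      (nhdsWithin 0 {0}ᶜ) atTop := by
  set C := ‖∏ i ∈ Finset.range k, (-(p : ℂ) - i)‖
  have hC : 0 < C := norm_pos_iff.mpr <| by
    simpa using prod_range_intCast_sub_ne_zero (R := ℂ) (m := -p) (by omega) k
  have he : p * α - (p + k) < 0 := by
    have := (lt_div_iff₀ (sub_pos.2 hα)).mp hpk
    linarith
  refine tendsto_atTop_mono' _ ?_
    ((tendsto_norm_rpow_nhdsNE_zero_atTop he).const_mul_atTop (half_pos hC))
  filter_upwards [self_mem_nhdsWithin,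
    eventually_nhdsWithin_of_eventually_nhds (Metric.ball_mem_nhds (0 : ℂ) one_pos)]
    with z (hz₀ : z ≠ 0) hz₁
  have hr₀ : 0 < ‖z‖ := norm_pos_iff.mpr hz₀
  have hr₁ : ‖z‖ ≤ 1 := (mem_ball_zero_iff.mp hz₁).le
  rw [norm_iteratedDeriv_zpow, norm_zpow, ← Real.rpow_intCast, ← Real.rpow_intCast,
    ← Real.rpow_mul hr₀.le]
  calc C / 2 * ‖z‖ ^ (p * α - (p + k)) = C * (‖z‖ ^ (p * α - (p + k)) / 2) := by ring
    _ ≤ C * (‖z‖ ^ (-(p + k : ℝ)) / (1 + ‖z‖ ^ (-(p * α)))) :=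
      mul_le_mul_of_nonneg_left
        (Real.rpow_sub_div_two_le_div_one_add_rpow_neg hr₀ hr₁ (by positivity)) hC.le
    _ = _ := by
      push_cast
      rw [neg_add', neg_mul, mul_div_assoc]

/-- For `f(z) = z^(-p)` with `1 ≤ p < k/(α-1)` and `α > 1`, the quantity
`|f^(k)(z)| / (1 + |f(z)|^α)` tends to `∞` as `z → 0` in the punctured disk. -/
theorem stmt_2 (k p : ℕ) (hk : 1 ≤ k) (hp : 1 ≤ p) (α : ℝ) (hα : 1 < α)
    (hpk : (p : ℝ) < (k : ℝ) / (α - 1)) :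
    Tendsto (fun z : ℂ =>
        ‖iteratedDeriv k (fun w : ℂ => w ^ (-(p : ℤ))) z‖ /
          (1 + ‖z ^ (-(p : ℤ))‖ ^ α))
      (nhdsWithin 0 {0}ᶜ) atTop :=
  stmt_2_general k p hp α hα hpk
end

section
/- Let k be a natural number and 0 < α ≤ 1. For the functions f_n(z) = (z-3)^n on the unit disk, for every z in the unit disk the quantity |f_n^(k)(z)|/(1 + |f_n(z)|^α) tends to ∞ as n → ∞. -/
/-!
Writing `r = ‖z - 3‖ ≥ 2`, one has `‖f_n^(k)(z)‖ = n(n-1)⋯(n-k+1) r^(n-k)` while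
`1 + ‖f_n(z)‖^α ≤ 2 r^n` because `r^n ≥ 1` and `α ≤ 1`. The quotient is therefore at least
`n(n-1)⋯(n-k+1) / (2 r^k)`, which tends to infinity as soon as `k ≥ 1`.
-/

open Filter

theorem Nat.tendsto_descFactorial_atTop {k : ℕ} (hk : k ≠ 0) :
    Tendsto (fun n : ℕ => n.descFactorial k) atTop atTop :=
  tendsto_atTop_mono
    (fun n => (Nat.le_self_pow hk (n + 1 - k)).trans (Nat.pow_sub_le_descFactorial n k))
    ((tendsto_sub_atTop_nat k).comp (tendsto_add_atTop_nat 1))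

theorem norm_iteratedDeriv_sub_const_pow {𝕜 : Type*} [RCLike 𝕜]
    (a z : 𝕜) (n k : ℕ) :
    ‖iteratedDeriv k (fun w : 𝕜 => (w - a) ^ n) z‖ = n.descFactorial k * ‖z - a‖ ^ (n - k) := by
  rw [iteratedDeriv_comp_sub_const k (· ^ n) a]
  simp only [iteratedDeriv_pow, norm_mul, norm_pow, RCLike.norm_natCast]

theorem div_two_mul_pow_le_mul_pow_sub_div_one_add_rpow {r α d : ℝ} (hr : 1 ≤ r) (hα : α ≤ 1)
    (hd : 0 ≤ d) {n k : ℕ} (hkn : k ≤ n) :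
    d / (2 * r ^ k) ≤ d * r ^ (n - k) / (1 + (r ^ n) ^ α) := by
  have hrn : 1 ≤ r ^ n := one_le_pow₀ hr
  have hden : 1 + (r ^ n) ^ α ≤ 2 * r ^ n := by
    linarith [Real.rpow_le_self_of_one_le hrn hα]
  calc d / (2 * r ^ k) = d * r ^ (n - k) / (2 * r ^ n) := by
        rw [← pow_sub_mul_pow r hkn]
        field_simp
    _ ≤ d * r ^ (n - k) / (1 + (r ^ n) ^ α) :=
        div_le_div_of_nonneg_left (by positivity) (by positivity) hden

theorem stmt_3_general (k : ℕ) (hk : 1 ≤ k) (α : ℝ) (hα1 : α ≤ 1)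
    (z : ℂ) (hz : z ∈ Metric.ball (0 : ℂ) 1) :
    Tendsto (fun n : ℕ =>
        ‖iteratedDeriv k (fun w : ℂ => (w - 3) ^ n) z‖ /
          (1 + ‖(z - 3) ^ n‖ ^ α))
      atTop atTop := by
  have hr : 1 ≤ ‖z - 3‖ := by
    have h3 := norm_sub_norm_le (3 : ℂ) z
    rw [norm_sub_rev] at h3
    rw [Metric.mem_ball, dist_zero_right] at hz
    norm_num at h3
    linarith
  have hlower : Tendsto (fun n : ℕ => (n.descFactorial k : ℝ) / (2 * ‖z - 3‖ ^ k)) atTop atTop :=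
    (tendsto_natCast_atTop_atTop.comp (Nat.tendsto_descFactorial_atTop (by omega))).atTop_div_const
      (by positivity)
  refine tendsto_atTop_mono' _ ?_ hlower
  filter_upwards [eventually_ge_atTop k] with n hkn
  rw [norm_iteratedDeriv_sub_const_pow, norm_pow]
  exact div_two_mul_pow_le_mul_pow_sub_div_one_add_rpow hr hα1 (Nat.cast_nonneg _) hkn

/-- For `f_n(z) = (z-3)^n` on the unit disk and `0 < α ≤ 1`, for every `z` in the unit
disk, `|f_n^(k)(z)| / (1 + |f_n(z)|^α) → ∞` as `n → ∞`. -/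
theorem stmt_3 (k : ℕ) (hk : 1 ≤ k) (α : ℝ) (hα0 : 0 < α) (hα1 : α ≤ 1)
    (z : ℂ) (hz : z ∈ Metric.ball (0 : ℂ) 1) :
    Tendsto (fun n : ℕ =>
        ‖iteratedDeriv k (fun w : ℂ => (w - 3) ^ n) z‖ /
          (1 + ‖(z - 3) ^ n‖ ^ α))
      atTop atTop :=
  stmt_3_general k hk α hα1 z hz
end

section
/- For the function f_n(z) = (z-3)^n with n ≥ k, one has |f_n^(k)(z)|/(1 + |f_n(z)|^α) ≥ (1/2)(n-k)^k · |z-3|^(n(1-α)-k) for all z in the unit disk. -/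
/-!
The `k`-th derivative of `(z-3)^n` is `n(n-1)⋯(n-k+1) (z-3)^(n-k)`, and each of the `k` factors
is at least `n-k`. On the unit disk `|z-3| ≥ 1`, so `1 + |z-3|^(nα) ≤ 2|z-3|^(nα)`, which yields
the factor `1/2` and the exponent `(n-k) - nα`.
-/

open Finset

theorem iteratedDeriv_sub_const_pow {𝕜 : Type*} [NontriviallyNormedField 𝕜] (n k : ℕ) (c z : 𝕜) :
    iteratedDeriv k (fun w => (w - c) ^ n) z
      = (∏ i ∈ range k, ((n : 𝕜) - i)) * (z - c) ^ (n - k) := by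
  rw [iteratedDeriv_comp_sub_const k (· ^ n) c, iteratedDeriv_eq_iterate]
  exact iter_deriv_pow n (z - c) k

theorem sub_pow_le_norm_prod_range_sub {𝕜 : Type*} [RCLike 𝕜] {n k : ℕ} (hkn : k ≤ n) :
    ((n : ℝ) - k) ^ k ≤ ‖∏ i ∈ range k, ((n : 𝕜) - i)‖ := by
  rw [norm_prod, pow_eq_prod_const]
  refine prod_le_prod (fun _ _ => sub_nonneg.2 (by exact_mod_cast hkn)) fun i hi => ?_
  rw [mem_range] at hi
  rw [← Nat.cast_sub (by omega : i ≤ n), RCLike.norm_natCast, Nat.cast_sub (by omega)]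
  gcongr

theorem half_mul_rpow_sub_le_div {r s m C : ℝ} (hr : 1 ≤ r) (hs : 0 ≤ s) (hC : 0 ≤ C) :
    1 / 2 * C * r ^ (m - s) ≤ C * r ^ m / (1 + r ^ s) := by
  have hrs : 1 ≤ r ^ s := Real.one_le_rpow hr hs
  rw [Real.rpow_sub (by linarith), le_div_iff₀ (by linarith)]
  calc 1 / 2 * C * (r ^ m / r ^ s) * (1 + r ^ s)
      ≤ 1 / 2 * C * (r ^ m / r ^ s) * (2 * r ^ s) := by gcongr; linarith
    _ = C * r ^ m := by field_simp

theorem stmt_4_general (k n : ℕ) (hnk : k ≤ n) (α : ℝ) (hα0 : 0 < α)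
    (z : ℂ) (hz : z ∈ Metric.ball (0 : ℂ) 1) :
    (1 / 2) * ((n : ℝ) - k) ^ k * ‖z - 3‖ ^ ((n : ℝ) * (1 - α) - k) ≤
      ‖iteratedDeriv k (fun w : ℂ => (w - 3) ^ n) z‖ / (1 + ‖(z - 3) ^ n‖ ^ α) := by
  have hr : 1 ≤ ‖z - 3‖ := by
    have h3 := norm_sub_norm_le (3 : ℂ) z
    rw [norm_sub_rev, Complex.norm_ofNat] at h3
    rw [mem_ball_zero_iff] at hz
    linarith
  set P := ∏ i ∈ range k, ((n : ℂ) - i)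
  calc (1 / 2) * ((n : ℝ) - k) ^ k * ‖z - 3‖ ^ ((n : ℝ) * (1 - α) - k)
      = 1 / 2 * ((n : ℝ) - k) ^ k * ‖z - 3‖ ^ (((n - k : ℕ) : ℝ) - n * α) := by
        rw [Nat.cast_sub hnk]; ring_nf
    _ ≤ 1 / 2 * ‖P‖ * ‖z - 3‖ ^ (((n - k : ℕ) : ℝ) - n * α) := by
        gcongr; exact sub_pow_le_norm_prod_range_sub hnk
    _ ≤ ‖P‖ * ‖z - 3‖ ^ ((n - k : ℕ) : ℝ) / (1 + ‖z - 3‖ ^ ((n : ℝ) * α)) :=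
        half_mul_rpow_sub_le_div hr (by positivity) (norm_nonneg _)
    _ = ‖iteratedDeriv k (fun w : ℂ => (w - 3) ^ n) z‖ / (1 + ‖(z - 3) ^ n‖ ^ α) := by
        rw [iteratedDeriv_sub_const_pow, norm_mul, norm_pow, norm_pow, Real.rpow_natCast,
          Real.rpow_mul (norm_nonneg _), Real.rpow_natCast]

/-- For `f_n(z) = (z-3)^n` with `n ≥ k`, `0 < α ≤ 1` and `z` in the unit disk,
`|f_n^(k)(z)| / (1 + |f_n(z)|^α) ≥ (1/2) (n-k)^k |z-3|^(n(1-α)-k)`. -/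
theorem stmt_4 (k n : ℕ) (hk : 1 ≤ k) (hnk : k ≤ n) (α : ℝ) (hα0 : 0 < α) (hα1 : α ≤ 1)
    (z : ℂ) (hz : z ∈ Metric.ball (0 : ℂ) 1) :
    (1 / 2) * ((n : ℝ) - k) ^ k * ‖z - 3‖ ^ ((n : ℝ) * (1 - α) - k) ≤
      ‖iteratedDeriv k (fun w : ℂ => (w - 3) ^ n) z‖ / (1 + ‖(z - 3) ^ n‖ ^ α) :=
  stmt_4_general k n hnk α hα0 z hz
end

section
/- Let s, r with 0 < r < s, a ∈ ℂ with |a| < s, and z with |z| = r. Then |s² - conj(a)·z| ≥ s(s - r), and consequently the (k-1)-st derivative of G_a'/G_a at z satisfies |(G_a'/G_a)^(k-1)(z)| ≤ (k-1)! · (1/(s-r)^k + 1/|z-a|^k). -/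
/-!
The logarithmic derivative of `G_a` splits into partial fractions,
`G_a'/G_a (w) = -conj(a)/(s² - conj(a) w) - 1/(w - a)`, and the iterated derivatives of
`w ↦ (c w + d)⁻¹` are explicit. The bound then reduces to
`|conj(a)| / |s² - conj(a) z| ≤ s / (s (s - r)) = 1 / (s - r)`, where the denominator is
estimated by the reverse triangle inequality `|s² - conj(a) z| ≥ s² - |a| r ≥ s (s - r)`.
-/

section IteratedDeriv

variable {𝕜 : Type*} [NontriviallyNormedField 𝕜]

theorem iteratedDeriv_inv_linear (n : ℕ) (c d z : 𝕜) :
    iteratedDeriv n (fun w => (c * w + d)⁻¹) z =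
      (-1) ^ n * n.factorial * c ^ n * ((c * z + d) ^ (n + 1))⁻¹ := by
  have hexp : (-1 - n : ℤ) = -((n + 1 : ℕ) : ℤ) := by push_cast; ring
  rw [iteratedDeriv_eq_iterate, iter_deriv_inv_linear]
  simp only [hexp, zpow_neg, zpow_natCast]

theorem logDeriv_linear_div_linear {b c d a w : 𝕜} (hN : b - c * w ≠ 0) (hwa : w ≠ a)
    (hd : d ≠ 0) :
    logDeriv (fun u => (b - c * u) / (d * (u - a))) w = -c * (b - c * w)⁻¹ - (w - a)⁻¹ := by
  have hwa' : w - a ≠ 0 := sub_ne_zero.mpr hwa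
  have hN' : HasDerivAt (fun u => b - c * u) (-c) w := by
    simpa using ((hasDerivAt_id w).const_mul c).const_sub b
  have hD' : HasDerivAt (fun u => d * (u - a)) d w := by
    simpa using ((hasDerivAt_id w).sub_const a).const_mul d
  rw [logDeriv_apply, (hN'.fun_div hD' (mul_ne_zero hd hwa')).deriv]
  field_simp

theorem iteratedDeriv_logDeriv_linear_div_linear (n : ℕ) {b c d a z : 𝕜} (hN : b - c * z ≠ 0)
    (hza : z ≠ a) (hd : d ≠ 0) :
    iteratedDeriv n (logDeriv fun u => (b - c * u) / (d * (u - a))) z =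
      n.factorial * (-c ^ (n + 1) * ((b - c * z) ^ (n + 1))⁻¹ +
        (-1) ^ (n + 1) * ((z - a) ^ (n + 1))⁻¹) := by
  have hcont : ContinuousAt (fun w => b - c * w) z := by fun_prop
  have hev : (logDeriv fun u => (b - c * u) / (d * (u - a))) =ᶠ[nhds z]
      fun w => -c * (-c * w + b)⁻¹ - (1 * w + -a)⁻¹ := by
    filter_upwards [hcont.eventually_ne hN, eventually_ne_nhds hza] with w hNw hwa
    rw [logDeriv_linear_div_linear hNw hwa hd]
    ring_nf
  have hN' : -c * z + b ≠ 0 := by rwa [neg_mul, neg_add_eq_sub]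
  have hza' : 1 * z + -a ≠ 0 := by rwa [one_mul, ← sub_eq_add_neg, sub_ne_zero]
  rw [hev.iteratedDeriv_eq, iteratedDeriv_fun_sub (by fun_prop (disch := exact hN'))
    (by fun_prop (disch := exact hza')), iteratedDeriv_const_mul_field,
    iteratedDeriv_inv_linear, iteratedDeriv_inv_linear]
  simp only [neg_mul c z, neg_add_eq_sub, one_mul, ← sub_eq_add_neg]
  have hsign : (-1 : 𝕜) ^ n * (-c) ^ n = c ^ n := by rw [← mul_pow]; simp
  linear_combination (-c * n.factorial * ((b - c * z) ^ (n + 1))⁻¹) * hsign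

end IteratedDeriv

theorem mul_sub_le_norm_sq_sub_conj_mul {s r : ℝ} {a z : ℂ} (ha : ‖a‖ ≤ s) (hz : ‖z‖ ≤ r) :
    s * (s - r) ≤ ‖(s : ℂ) ^ 2 - (starRingEnd ℂ) a * z‖ := by
  have hs : 0 ≤ s := (norm_nonneg a).trans ha
  calc s * (s - r) = s ^ 2 - s * r := by ring
    _ ≤ ‖(s : ℂ) ^ 2‖ - ‖(starRingEnd ℂ) a * z‖ := by
      rw [norm_pow, Complex.norm_real, Real.norm_eq_abs, sq_abs, norm_mul, RCLike.norm_conj]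
      gcongr
    _ ≤ ‖(s : ℂ) ^ 2 - (starRingEnd ℂ) a * z‖ := norm_sub_norm_le _ _

theorem norm_div_le_one_div_sub {s r : ℝ} {c N : ℂ} (hs : 0 < s) (hsr : 0 < s - r) (hc : ‖c‖ ≤ s)
    (hN : s * (s - r) ≤ ‖N‖) : ‖c / N‖ ≤ 1 / (s - r) :=
  calc ‖c / N‖ = ‖c‖ / ‖N‖ := norm_div c N
    _ ≤ s / (s * (s - r)) := div_le_div₀ hs.le hc (by positivity) hN
    _ = 1 / (s - r) := by field_simp

theorem norm_factorial_mul_add_le (n : ℕ) {s r : ℝ} {c N w : ℂ} (hs : 0 < s) (hsr : 0 < s - r)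
    (hc : ‖c‖ ≤ s) (hN : s * (s - r) ≤ ‖N‖) :
    ‖(n.factorial : ℂ) * (-c ^ (n + 1) * (N ^ (n + 1))⁻¹ + (-1) ^ (n + 1) * (w ^ (n + 1))⁻¹)‖ ≤
      n.factorial * (1 / (s - r) ^ (n + 1) + 1 / ‖w‖ ^ (n + 1)) := by
  rw [norm_mul, norm_natCast]
  gcongr
  refine (norm_add_le _ _).trans (add_le_add ?_ (by simp))
  rw [neg_mul, norm_neg, ← div_eq_mul_inv, ← div_pow, norm_pow, ← one_div_pow]
  exact pow_le_pow_left₀ (norm_nonneg _) (norm_div_le_one_div_sub hs hsr hc hN) _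

theorem stmt_6_general (s r : ℝ) (hrs : r < s) (a : ℂ) (ha : ‖a‖ < s)
    (k : ℕ) (hk : 1 ≤ k) (z : ℂ) (hz : ‖z‖ = r) (hza : z ≠ a) :
    s * (s - r) ≤ ‖(s : ℂ) ^ 2 - (starRingEnd ℂ) a * z‖ ∧
    ‖iteratedDeriv (k - 1)
        (fun w : ℂ =>
          deriv (fun u : ℂ => ((s : ℂ) ^ 2 - (starRingEnd ℂ) a * u) / ((s : ℂ) * (u - a))) w /
            (((s : ℂ) ^ 2 - (starRingEnd ℂ) a * w) / ((s : ℂ) * (w - a)))) z‖ ≤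
      ((k - 1).factorial : ℝ) * (1 / (s - r) ^ k + 1 / ‖z - a‖ ^ k) := by
  have hsr : 0 < s - r := sub_pos.mpr hrs
  have hs : 0 < s := (hz ▸ norm_nonneg z).trans_lt hrs
  have hlow := mul_sub_le_norm_sq_sub_conj_mul ha.le hz.le
  refine ⟨hlow, ?_⟩
  have hN : (s : ℂ) ^ 2 - (starRingEnd ℂ) a * z ≠ 0 :=
    norm_pos_iff.mp ((mul_pos hs hsr).trans_le hlow)
  obtain ⟨n, rfl⟩ := Nat.exists_eq_add_of_le' hk
  change ‖iteratedDeriv n (logDeriv fun u : ℂ =>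
    ((s : ℂ) ^ 2 - (starRingEnd ℂ) a * u) / ((s : ℂ) * (u - a))) z‖ ≤ _
  rw [iteratedDeriv_logDeriv_linear_div_linear n hN hza (Complex.ofReal_ne_zero.mpr hs.ne')]
  exact norm_factorial_mul_add_le n hs hsr (by simpa using ha.le) hlow

/-- For `0 < r < s`, `|a| < s` and `|z| = r`, `z ≠ a`, one has
`|s² - conj(a)z| ≥ s(s-r)` and the `(k-1)`-st derivative of the logarithmic derivative of
`G_a(z) = (s² - conj(a)z)/(s(z-a))` is bounded by `(k-1)! (1/(s-r)^k + 1/|z-a|^k)`. -/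
theorem stmt_6 (s r : ℝ) (hr : 0 < r) (hrs : r < s) (a : ℂ) (ha : ‖a‖ < s)
    (k : ℕ) (hk : 1 ≤ k) (z : ℂ) (hz : ‖z‖ = r) (hza : z ≠ a) :
    s * (s - r) ≤ ‖(s : ℂ) ^ 2 - (starRingEnd ℂ) a * z‖ ∧
    ‖iteratedDeriv (k - 1)
        (fun w : ℂ =>
          deriv (fun u : ℂ => ((s : ℂ) ^ 2 - (starRingEnd ℂ) a * u) / ((s : ℂ) * (u - a))) w /
            (((s : ℂ) ^ 2 - (starRingEnd ℂ) a * w) / ((s : ℂ) * (w - a)))) z‖ ≤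
      ((k - 1).factorial : ℝ) * (1 / (s - r) ^ k + 1 / ‖z - a‖ ^ k) :=
  stmt_6_general s r hrs a ha k hk z hz hza
end

section
/- Let D be a domain in ℂ, k and m natural numbers, and {g_n} a sequence of holomorphic functions on D, none identically zero, all of whose zeros have multiplicity at least m. If g_n converges to 0 locally uniformly on D, then the holomorphic functions (g_n^(k))^m / g_n^(m-k) converge to 0 locally uniformly on D. -/
/-!
Fix a disc `B(x, 6r)` in `D` on which `|g_n| ≤ η^m`, and a point `w ∈ B(x, r)`. When `k ≥ m`
the quotient is `(g_n^(k))^m g_n^(k-m)` and Cauchy's estimate bounds it by `O(η^(km))`.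
When `k < m` and `g_n(w) ≠ 0`, let `d ≤ r` be the distance from `w` to the nearest zero `a` of
`g_n` (or `d = r` if there is none). Since `a` is a zero of order at least `m`, the maximum
principle applied to `g_n / (z - a)^m` gives `|g_n| ≤ (dη/r)^m` on the zero-free disc `B(w, d)`,
where `g_n = u^m` for a holomorphic `u` with `|u| ≤ dη/r`. By Cauchy's estimate for `u'`,
`|u| ≤ 2|u(w)|` on the disc of radius `ρ ≍ |u(w)| r / η` about `w`, and Cauchy's estimate for
`u^m` on that disc gives `|g_n^(k)(w)| ≲ |u(w)|^(m-k) (η/r)^k`; the powers of `|u(w)|` cancel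
in the quotient, leaving `O((η/r)^(km))`.
-/

open Filter Metric Complex Topology
open scoped Nat

theorem norm_iteratedDeriv_le_of_forall_mem_ball_norm_le {f : ℂ → ℂ} {c : ℂ} {ρ S : ℝ} (n : ℕ)
    (hρ : 0 < ρ) (hf : DifferentiableOn ℂ f (ball c ρ)) (hS : ∀ z ∈ ball c ρ, ‖f z‖ ≤ S) :
    ‖iteratedDeriv n f c‖ ≤ n ! * S / (ρ / 2) ^ n := by
  have hsub : closedBall c (ρ / 2) ⊆ ball c ρ := closedBall_subset_ball (half_lt_self hρ)
  refine norm_iteratedDeriv_le_of_forall_mem_sphere_norm_le n (half_pos hρ) ?_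
    fun z hz ↦ hS z (hsub (sphere_subset_closedBall hz))
  exact (hf.mono hsub).diffContOnCl_ball le_rfl

theorem exists_differentiableOn_pow_eq {f : ℂ → ℂ} {c : ℂ} {ρ : ℝ} (hρ : 0 < ρ)
    (hf : DifferentiableOn ℂ f (ball c ρ)) (hnz : ∀ z ∈ ball c ρ, f z ≠ 0) {m : ℕ} (hm : m ≠ 0) :
    ∃ u : ℂ → ℂ, DifferentiableOn ℂ u (ball c ρ) ∧ ∀ z ∈ ball c ρ, u z ^ m = f z := by
  have hf' : DifferentiableOn ℂ (deriv f) (ball c ρ) :=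
    (hf.analyticOnNhd isOpen_ball).deriv.differentiableOn
  obtain ⟨L, hLc, hL⟩ := ((hf'.div hf hnz).isExactOn_ball).with_val_at c (log (f c))
  have hexpL : ∀ z ∈ ball c ρ, exp (L z) = f z := by
    have hderiv : ∀ z ∈ ball c ρ, HasDerivAt (fun z ↦ exp (-L z) * f z) 0 z := by
      intro z hz
      have hfz := (hf.differentiableAt (isOpen_ball.mem_nhds hz)).hasDerivAt
      refine (((hL z hz).fun_neg.cexp).fun_mul hfz).congr_deriv ?_
      rw [Pi.div_apply]
      field_simp [hnz z hz]
      ring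
    intro z hz
    have hconst := isOpen_ball.is_const_of_deriv_eq_zero (convex_ball c ρ).isPreconnected
      (fun z hz ↦ (hderiv z hz).differentiableAt.differentiableWithinAt)
      (fun z hz ↦ (hderiv z hz).deriv) hz (mem_ball_self hρ)
    rwa [hLc, exp_neg, exp_neg, exp_log (hnz c (mem_ball_self hρ)),
      inv_mul_cancel₀ (hnz c (mem_ball_self hρ)), inv_mul_eq_one₀ (exp_ne_zero _)] at hconst
  refine ⟨fun z ↦ exp (L z / m), ?_, fun z hz ↦ ?_⟩
  · exact fun z hz ↦ ((hL z hz).differentiableAt.div_const _).cexp.differentiableWithinAt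
  · rw [← exp_nat_mul, mul_div_cancel₀ _ (Nat.cast_ne_zero.mpr hm), hexpL z hz]

theorem exists_eq_pow_mul_of_iteratedDeriv_eq_zero {f : ℂ → ℂ} {a : ℂ} {U : Set ℂ} {m : ℕ}
    (hU : IsOpen U) (hf : DifferentiableOn ℂ f U) (ha : a ∈ U)
    (hvan : ∀ j < m, iteratedDeriv j f a = 0) :
    ∃ q : ℂ → ℂ, DifferentiableOn ℂ q U ∧ ∀ z, f z = (z - a) ^ m * q z := by
  have hfa : AnalyticAt ℂ f a := hf.analyticAt (hU.mem_nhds ha)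
  obtain ⟨g, hg, hfg⟩ := (natCast_le_analyticOrderAt hfa).mp
    ((natCast_le_analyticOrderAt_iff_iteratedDeriv_eq_zero hfa).mpr hvan)
  have hq : ∀ z ≠ a, Function.update (fun z ↦ f z / (z - a) ^ m) a (g a) z
      = f z / (z - a) ^ m := fun z hz ↦ Function.update_of_ne hz _ _
  refine ⟨Function.update (fun z ↦ f z / (z - a) ^ m) a (g a), fun z hz ↦ ?_, fun z ↦ ?_⟩
  · apply DifferentiableAt.differentiableWithinAt
    rcases eq_or_ne z a with rfl | hza
    · refine hg.differentiableAt.congr_of_eventuallyEq ?_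
      filter_upwards [hfg] with w hw
      rcases eq_or_ne w z with rfl | hwz
      · simp
      · rw [hq w hwz, hw, smul_eq_mul,
          mul_div_cancel_left₀ _ (pow_ne_zero _ (sub_ne_zero.mpr hwz))]
    · refine DifferentiableAt.congr_of_eventuallyEq ?_
        ((isOpen_ne.eventually_mem hza).mono fun w hw ↦ hq w hw)
      exact (hf.differentiableAt (hU.mem_nhds hz)).div (by fun_prop)
        (pow_ne_zero _ (sub_ne_zero.mpr hza))
  · rcases eq_or_ne z a with rfl | hza
    · simpa using hfg.self_of_nhds
    · rw [hq z hza, mul_div_cancel₀ _ (pow_ne_zero _ (sub_ne_zero.mpr hza))]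

theorem norm_le_mul_div_pow_of_iteratedDeriv_eq_zero {f : ℂ → ℂ} {a : ℂ} {R ρ M : ℝ} {m : ℕ}
    (hf : DifferentiableOn ℂ f (ball a R)) (hvan : ∀ j < m, iteratedDeriv j f a = 0)
    (hρ : 0 < ρ) (hρR : ρ < R) (hM : ∀ z ∈ sphere a ρ, ‖f z‖ ≤ M) {z : ℂ}
    (hz : z ∈ closedBall a ρ) : ‖f z‖ ≤ M * (‖z - a‖ / ρ) ^ m := by
  obtain ⟨q, hq, hfq⟩ := exists_eq_pow_mul_of_iteratedDeriv_eq_zero isOpen_ball hf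
    (mem_ball_self (hρ.trans hρR)) hvan
  have hqM : ‖q z‖ ≤ M / ρ ^ m := by
    refine Complex.norm_le_of_forall_mem_frontier_norm_le isBounded_ball
      ((hq.mono (closedBall_subset_ball hρR)).diffContOnCl_ball le_rfl) (fun y hy ↦ ?_)
      (by rwa [closure_ball a hρ.ne'])
    rw [frontier_ball a hρ.ne'] at hy
    have hya : ‖y - a‖ = ρ := mem_sphere_iff_norm.mp hy
    rw [le_div_iff₀ (by positivity), ← hya, mul_comm, ← norm_pow, ← norm_mul, ← hfq]
    exact hM y hy
  rw [hfq, norm_mul, norm_pow, div_pow, mul_div_assoc', le_div_iff₀ (by positivity)]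
  calc ‖z - a‖ ^ m * ‖q z‖ * ρ ^ m ≤ ‖z - a‖ ^ m * (M / ρ ^ m) * ρ ^ m := by gcongr
    _ = M * ‖z - a‖ ^ m := by field_simp

theorem norm_iteratedDeriv_pow_le {u : ℂ → ℂ} {w : ℂ} {d S : ℝ} (k m : ℕ) (hd : 0 < d)
    (hu : DifferentiableOn ℂ u (ball w d)) (hS : ∀ z ∈ ball w d, ‖u z‖ ≤ S) (hw : u w ≠ 0) :
    ‖iteratedDeriv k (fun z ↦ u z ^ m) w‖ ≤
      k ! * 2 ^ m * (8 * S / d) ^ k * ‖u w‖ ^ ((m : ℤ) - k) := by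
  set b := ‖u w‖
  have hb : 0 < b := norm_pos_iff.mpr hw
  have hbS : b ≤ S := hS w (mem_ball_self hd)
  have hS0 : 0 < S := hb.trans_le hbS
  have hderiv : ∀ z ∈ ball w (d / 2), ‖deriv u z‖ ≤ 4 * S / d := by
    intro z hz
    have hsub : ball z (d / 2) ⊆ ball w d := ball_subset_ball' (by linarith [mem_ball.mp hz])
    have h := norm_iteratedDeriv_le_of_forall_mem_ball_norm_le 1 (half_pos hd) (hu.mono hsub)
      fun y hy ↦ hS y (hsub hy)
    rw [iteratedDeriv_one] at h
    exact h.trans_eq (by field_simp; norm_num)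
  -- small enough that, by the bound on `deriv u`, `u` moves by at most `‖u w‖` on `ball w ρ`
  set ρ := b * d / (4 * S)
  have hρ : 0 < ρ := by positivity
  have hρd : ρ ≤ d / 2 := by
    rw [div_le_iff₀ (by positivity)]
    nlinarith
  have hnear : ∀ z ∈ ball w ρ, ‖u z‖ ^ m ≤ (2 * b) ^ m := by
    intro z hz
    have hlip := (convex_ball w (d / 2)).norm_image_sub_le_of_norm_deriv_le
      (fun y hy ↦ hu.differentiableAt (isOpen_ball.mem_nhds (ball_subset_ball (by linarith) hy)))
      hderiv (mem_ball_self (by positivity)) (ball_subset_ball hρd hz)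
    gcongr
    calc ‖u z‖ ≤ ‖u w‖ + ‖u z - u w‖ := norm_le_norm_add_norm_sub' (u z) (u w)
      _ ≤ b + 4 * S / d * ρ := by
          gcongr; exact hlip.trans (by gcongr; exact (mem_ball_iff_norm.mp hz).le)
      _ = 2 * b := by simp only [ρ]; field_simp; ring
  have hcauchy := norm_iteratedDeriv_le_of_forall_mem_ball_norm_le k hρ
    ((hu.mono (ball_subset_ball (hρd.trans (by linarith)))).pow m)
    (fun z hz ↦ (norm_pow (u z) m).trans_le (hnear z hz))
  refine hcauchy.trans_eq ?_
  rw [zpow_sub₀ hb.ne', zpow_natCast, zpow_natCast]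
  have hρ2 : ρ / 2 = b * (d / (8 * S)) := by simp only [ρ]; field_simp; ring
  have hX : (d / (8 * S)) ^ k ≠ 0 := by positivity
  rw [hρ2, ← inv_div d, inv_pow, mul_pow, mul_pow]
  field_simp

theorem norm_iteratedDeriv_pow_div_zpow_le_of_ne_zero {f : ℂ → ℂ} {w : ℂ} {d S : ℝ} {k m : ℕ}
    (hm : m ≠ 0) (hd : 0 < d) (hS : 0 ≤ S) (hf : DifferentiableOn ℂ f (ball w d))
    (hnz : ∀ z ∈ ball w d, f z ≠ 0) (hfS : ∀ z ∈ ball w d, ‖f z‖ ≤ S ^ m) :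
    ‖(iteratedDeriv k f w) ^ m / (f w) ^ ((m : ℤ) - k)‖ ≤ (k ! * 2 ^ m * (8 * S / d) ^ k) ^ m := by
  obtain ⟨u, hu, hum⟩ := exists_differentiableOn_pow_eq hd hf hnz hm
  have huS : ∀ z ∈ ball w d, ‖u z‖ ≤ S := fun z hz ↦
    (pow_le_pow_iff_left₀ (norm_nonneg _) hS hm).mp (by rw [← norm_pow, hum z hz]; exact hfS z hz)
  have hw : w ∈ ball w d := mem_ball_self hd
  have huw : u w ≠ 0 := fun h ↦ hnz w hw (by rw [← hum w hw, h, zero_pow hm])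
  have hderiv : iteratedDeriv k f w = iteratedDeriv k (fun z ↦ u z ^ m) w :=
    Filter.EventuallyEq.iteratedDeriv_eq k
      (eventually_of_mem (isOpen_ball.mem_nhds hw) fun z hz ↦ (hum z hz).symm)
  have hbound := norm_iteratedDeriv_pow_le k m hd hu huS huw
  have hpow : (‖u w‖ ^ m) ^ ((m : ℤ) - k) = (‖u w‖ ^ ((m : ℤ) - k)) ^ m := by
    rw [← zpow_natCast ‖u w‖ m, ← zpow_mul, ← zpow_natCast, ← zpow_mul, mul_comm]
  rw [norm_div, norm_pow, norm_zpow, hderiv, ← hum w hw, norm_pow, hpow, ← div_pow]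
  gcongr
  rwa [div_le_iff₀ (by positivity)]
theorem norm_iteratedDeriv_pow_div_zpow_le_of_le {f : ℂ → ℂ} {w : ℂ} {r η : ℝ} {k m : ℕ}
    (hmk : m ≤ k) (hr : 0 < r) (hf : DifferentiableOn ℂ f (ball w r))
    (hfη : ∀ z ∈ ball w r, ‖f z‖ ≤ η ^ m) :
    ‖(iteratedDeriv k f w) ^ m / (f w) ^ ((m : ℤ) - k)‖ ≤ (k ! * (2 * η / r) ^ k) ^ m := by
  obtain ⟨j, rfl⟩ := Nat.exists_eq_add_of_le hmk
  have hfw : ‖f w‖ ≤ η ^ m := hfη w (mem_ball_self hr)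
  have hD := norm_iteratedDeriv_le_of_forall_mem_ball_norm_le (m + j) hr hf hfη
  rw [show (m : ℤ) - (m + j : ℕ) = -(j : ℤ) by push_cast; ring, zpow_neg, zpow_natCast,
    div_inv_eq_mul, norm_mul, norm_pow, norm_pow]
  calc ‖iteratedDeriv (m + j) f w‖ ^ m * ‖f w‖ ^ j
      ≤ ((m + j)! * η ^ m / (r / 2) ^ (m + j)) ^ m * (η ^ m) ^ j := by
        gcongr
        exact pow_nonneg ((norm_nonneg _).trans hD) m
    _ = ((m + j)! * (2 * η / r) ^ (m + j)) ^ m := by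
        rw [show r / 2 = (2 / r)⁻¹ by rw [inv_div], inv_pow, div_inv_eq_mul,
          show 2 * η / r = 2 / r * η by ring]
        ring

theorem exists_ball_ne_zero_norm_le {f : ℂ → ℂ} {z₀ w : ℂ} {r M : ℝ} {m : ℕ} (hr : 0 < r)
    (hf : DifferentiableOn ℂ f (ball z₀ (6 * r)))
    (hmult : ∀ a ∈ ball z₀ (6 * r), f a = 0 → ∀ j < m, iteratedDeriv j f a = 0)
    (hM : ∀ z ∈ ball z₀ (6 * r), ‖f z‖ ≤ M) (hw : w ∈ ball z₀ r) (hfw : f w ≠ 0) :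
    ∃ d, 0 < d ∧ d ≤ r ∧ (∀ z ∈ ball w d, f z ≠ 0) ∧ ∀ z ∈ ball w d, ‖f z‖ ≤ M * (d / r) ^ m := by
  have hwz₀ : dist w z₀ < r := hw
  have hclosed : closedBall w r ⊆ ball z₀ (6 * r) := closedBall_subset_ball' (by linarith)
  by_cases hzero : ∃ a ∈ closedBall w r, f a = 0
  · set Z := closedBall w r ∩ f ⁻¹' {0}
    have hZ : IsClosed Z := (hf.continuousOn.mono hclosed).preimage_isClosed_of_isClosed
      isClosed_closedBall isClosed_singleton
    obtain ⟨a, ⟨har, hfa : f a = 0⟩, hda⟩ := hZ.exists_infDist_eq_dist hzero w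
    have hwa : dist w a ≤ r := by rw [dist_comm]; exact har
    refine ⟨dist w a, dist_pos.mpr fun h ↦ hfw (h ▸ hfa), hwa, fun z hz hfz ↦ ?_, fun z hz ↦ ?_⟩
    · have hzZ : z ∈ Z := ⟨ball_subset_closedBall (ball_subset_ball hwa hz), hfz⟩
      have := infDist_le_dist_of_mem (x := w) hzZ
      rw [hda] at this
      exact (mem_ball'.mp hz).not_ge this
    · have haz₀ : dist a z₀ < 2 * r := by linarith [dist_triangle a w z₀, dist_comm a w]
      have hza : dist z a < 2 * dist w a := by linarith [dist_triangle z w a, mem_ball.mp hz]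
      have hbound := norm_le_mul_div_pow_of_iteratedDeriv_eq_zero (R := 4 * r)
        (hf.mono (ball_subset_ball' (by linarith))) (hmult a (hclosed har) hfa)
        (by positivity : 0 < 2 * r) (by linarith)
        (fun y hy ↦ hM y
          (sphere_subset_closedBall.trans (closedBall_subset_ball' (by linarith)) hy))
        (z := z) (mem_closedBall.mpr (by linarith))
      have hM0 : 0 ≤ M := (norm_nonneg _).trans (hM w (hclosed (mem_closedBall_self hr.le)))
      have hratio : ‖z - a‖ / (2 * r) ≤ dist w a / r := by
        rw [← dist_eq_norm, div_le_div_iff₀ (by positivity) hr]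
        nlinarith
      exact hbound.trans (mul_le_mul_of_nonneg_left (pow_le_pow_left₀ (by positivity) hratio m) hM0)
  · push Not at hzero
    refine ⟨r, hr, le_rfl, fun z hz ↦ hzero z (ball_subset_closedBall hz), fun z hz ↦ ?_⟩
    rw [div_self hr.ne', one_pow, mul_one]
    exact hM z (hclosed (ball_subset_closedBall hz))

theorem norm_iteratedDeriv_pow_div_zpow_le {f : ℂ → ℂ} {z₀ w : ℂ} {r η : ℝ} {k m : ℕ}
    (hm : m ≠ 0) (hr : 0 < r) (hη : 0 ≤ η) (hf : DifferentiableOn ℂ f (ball z₀ (6 * r)))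
    (hmult : ∀ a ∈ ball z₀ (6 * r), f a = 0 → ∀ j < m, iteratedDeriv j f a = 0)
    (hsmall : ∀ z ∈ ball z₀ (6 * r), ‖f z‖ ≤ η ^ m) (hw : w ∈ ball z₀ r) :
    ‖(iteratedDeriv k f w) ^ m / (f w) ^ ((m : ℤ) - k)‖ ≤ (k ! * 2 ^ m * (8 * η / r) ^ k) ^ m := by
  have hwz₀ : dist w z₀ < r := hw
  rcases le_or_gt m k with hmk | hkm
  · have hsub : ball w r ⊆ ball z₀ (6 * r) := ball_subset_ball' (by linarith)
    refine (norm_iteratedDeriv_pow_div_zpow_le_of_le hmk hr (hf.mono hsub)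
      fun z hz ↦ hsmall z (hsub hz)).trans (pow_le_pow_left₀ (by positivity) ?_ m)
    calc (k ! : ℝ) * (2 * η / r) ^ k = k ! * 1 * (2 * η / r) ^ k := by ring
      _ ≤ k ! * 2 ^ m * (8 * η / r) ^ k := by
          gcongr
          · exact one_le_pow₀ (by norm_num)
          · norm_num
  by_cases hfw : f w = 0
  · rw [hmult w (ball_subset_ball (by linarith) hw) hfw k hkm, zero_pow hm, zero_div, norm_zero]
    positivity
  obtain ⟨d, hd, hdr, hnz, hfd⟩ := exists_ball_ne_zero_norm_le hr hf hmult hsmall hw hfw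
  have hbound := norm_iteratedDeriv_pow_div_zpow_le_of_ne_zero (k := k) hm hd
    (by positivity : 0 ≤ d * η / r) (hf.mono (ball_subset_ball' (by linarith))) hnz
    fun z hz ↦ (hfd z hz).trans_eq (by rw [← mul_pow]; congr 1; ring)
  rwa [show 8 * (d * η / r) / d = 8 * η / r by field_simp] at hbound

theorem stmt_12_general (D : Set ℂ) (hD : IsOpen D)
    (k m : ℕ) (hk : 1 ≤ k) (hm : 1 ≤ m)
    (g : ℕ → ℂ → ℂ) (hg : ∀ n, DifferentiableOn ℂ (g n) D)
    (hmult : ∀ n, ∀ z ∈ D, g n z = 0 → ∀ j < m, iteratedDeriv j (g n) z = 0)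
    (hconv : TendstoLocallyUniformlyOn g 0 atTop D) :
    TendstoLocallyUniformlyOn
      (fun n z => (iteratedDeriv k (g n) z) ^ m / (g n z) ^ ((m : ℤ) - (k : ℤ)))
      0 atTop D := by
  rw [Metric.tendstoLocallyUniformlyOn_iff]
  intro ε hε x hx
  obtain ⟨R, hR, hRD⟩ := Metric.isOpen_iff.mp hD x hx
  set r := R / 7 with hrR
  have hr : 0 < r := by positivity
  have hsub : closedBall x (6 * r) ⊆ D :=
    (closedBall_subset_ball (by rw [hrR]; linarith)).trans hRD
  have hbound : Tendsto (fun η : ℝ ↦ (k ! * 2 ^ m * (8 * η / r) ^ k) ^ m) (𝓝[>] 0) (𝓝 0) := by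
    refine Tendsto.mono_left ?_ nhdsWithin_le_nhds
    convert (by fun_prop : Continuous fun η : ℝ ↦ (k ! * 2 ^ m * (8 * η / r) ^ k) ^ m).tendsto 0
    simp [zero_pow (by omega : k ≠ 0), zero_pow (by omega : m ≠ 0)]
  obtain ⟨η, hηε, hη⟩ := ((hbound.eventually (gt_mem_nhds hε)).and self_mem_nhdsWithin).exists
  have hsmall : ∀ᶠ n in atTop, ∀ z ∈ closedBall x (6 * r), ‖g n z‖ ≤ η ^ m := by
    have hunif := (tendstoLocallyUniformlyOn_iff_forall_isCompact hD).mp hconv _ hsub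
      (isCompact_closedBall x _)
    filter_upwards [Metric.tendstoUniformlyOn_iff.mp hunif (η ^ m) (by positivity)] with n hn z hz
    simpa using (hn z hz).le
  refine ⟨ball x r, mem_nhdsWithin_of_mem_nhds (ball_mem_nhds x hr), ?_⟩
  filter_upwards [hsmall] with n hn w hw
  have hball : ball x (6 * r) ⊆ D := ball_subset_closedBall.trans hsub
  simpa using (norm_iteratedDeriv_pow_div_zpow_le (by omega) hr hη.le ((hg n).mono hball)
    (fun a ha ↦ hmult n a (hball ha)) (fun z hz ↦ hn z (ball_subset_closedBall hz)) hw).trans_lt hηε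

/-- Theorem 2(a): if the holomorphic functions `g_n` (none identically
zero, all zeros of multiplicity at least `m`) converge to `0` locally uniformly on the
domain `D`, then `(g_n^(k))^m / g_n^(m-k) → 0` locally uniformly on `D`. -/
theorem stmt_12 (D : Set ℂ) (hD : IsOpen D) (hDc : IsPreconnected D)
    (k m : ℕ) (hk : 1 ≤ k) (hm : 1 ≤ m)
    (g : ℕ → ℂ → ℂ) (hg : ∀ n, DifferentiableOn ℂ (g n) D)
    (hne : ∀ n, ∃ z ∈ D, g n z ≠ 0)
    (hmult : ∀ n, ∀ z ∈ D, g n z = 0 → ∀ j < m, iteratedDeriv j (g n) z = 0)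
    (hconv : TendstoLocallyUniformlyOn g 0 atTop D) :
    TendstoLocallyUniformlyOn
      (fun n z => (iteratedDeriv k (g n) z) ^ m / (g n z) ^ ((m : ℤ) - (k : ℤ)))
      0 atTop D :=
  stmt_12_general D hD k m hk hm g hg hmult hconv
end

section
/- Let f be meromorphic on Δ(0, R₀), α ∈ Δ(0, R₀), and |α| < r < R < R₀. Then n(r,f) · (R-r)(R-|α|)/(R² + r|α|) ≤ N_α(R, f) - N_α(r, f), where n(r,f) counts the poles of f in the closed disk of radius r with multiplicity. -/
open Complex

/-- The modified counting function `N_α(r, ·)` associated with a multiset `b` of poles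
(counted with multiplicity). -/
noncomputable def modCounting (b : Multiset ℂ) (a : ℂ) (r : ℝ) : ℝ :=
  ((b.filter fun x => ‖x‖ < r).map fun x =>
    Real.log ‖((r : ℂ) ^ 2 - (starRingEnd ℂ) x * a) / ((r : ℂ) * (a - x))‖).sum

/-!
The contribution of a pole `x` to `N_α(ρ, f)` is `log ‖(ρ² - x̄α) / (ρ(α - x))‖`, the log-modulus
of the reciprocal of a Blaschke factor. The identity
`‖ρ² - x̄α‖² - ρ²‖α - x‖² = (ρ² - ‖α‖²)(ρ² - ‖x‖²)` shows that it is nonnegative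
for `‖x‖ ≤ ρ` and vanishes for `‖x‖ = ρ`. Hence `N_α(r, f)` may be summed over the closed disk of
radius `r`, and dropping the poles with `r < ‖x‖ < R` only decreases `N_α(R, f)`.
For a pole with `‖x‖ ≤ r`, set `c = x̄α`; the increase from `r` to `R` is
`log (r‖R² - c‖ / (R‖r² - c‖)) ≥ 1 - R‖r² - c‖ / (r‖R² - c‖)`, and the monotonicity of
`u ↦ ‖u - c‖ / (u + ‖c‖)` together with `‖c‖ ≤ r‖α‖` bounds this below by
`(R - r)(R - ‖α‖) / (R² + r‖α‖)`.
-/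

open ComplexConjugate

noncomputable def blaschkeLog (a x : ℂ) (ρ : ℝ) : ℝ :=
  Real.log ‖((ρ : ℂ) ^ 2 - conj x * a) / ((ρ : ℂ) * (a - x))‖

-- After squaring, the difference of the two sides is `2 (re c + ‖c‖) (v - u) (u v - ‖c‖²)`.
lemma norm_ofReal_sub_mul_le_norm_ofReal_sub_mul (c : ℂ) {u v : ℝ} (hu : 0 ≤ u) (huv : u ≤ v)
    (hc : ‖c‖ ^ 2 ≤ u * v) :
    ‖(u : ℂ) - c‖ * (v + ‖c‖) ≤ ‖(v : ℂ) - c‖ * (u + ‖c‖) := by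
  have norm_sub_sq (w : ℝ) : ‖(w : ℂ) - c‖ ^ 2 = w ^ 2 - 2 * w * c.re + ‖c‖ ^ 2 := by
    simp only [Complex.sq_norm, normSq_apply, sub_re, sub_im, ofReal_re, ofReal_im]
    ring
  have hre : 0 ≤ c.re + ‖c‖ := by linarith [neg_abs_le c.re, abs_re_le_norm c]
  have hv : 0 ≤ v := hu.trans huv
  rw [← sq_le_sq₀ (by positivity) (by positivity), mul_pow, mul_pow, norm_sub_sq, norm_sub_sq]
  nlinarith [mul_nonneg (mul_nonneg hre (sub_nonneg.2 huv)) (sub_nonneg.2 hc)]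

section BlaschkeFactor

variable {a x : ℂ} {ρ r R : ℝ}

lemma sq_norm_sub_conj_mul_sub_sq_norm_mul_sub (a x : ℂ) (ρ : ℝ) :
    ‖(ρ : ℂ) ^ 2 - conj x * a‖ ^ 2 - ‖(ρ : ℂ) * (a - x)‖ ^ 2 =
      (ρ ^ 2 - ‖a‖ ^ 2) * (ρ ^ 2 - ‖x‖ ^ 2) := by
  simp only [Complex.sq_norm, ← ofReal_pow, normSq_apply, sub_re, sub_im, mul_re, mul_im,
    conj_re, conj_im, ofReal_re, ofReal_im]
  ring

lemma norm_ofReal_mul_sub_le_norm_sq_sub_conj_mul (ha : ‖a‖ ≤ ρ) (hx : ‖x‖ ≤ ρ) :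
    ‖(ρ : ℂ) * (a - x)‖ ≤ ‖(ρ : ℂ) ^ 2 - conj x * a‖ := by
  have := sq_norm_sub_conj_mul_sub_sq_norm_mul_sub a x ρ
  rw [← sq_le_sq₀ (norm_nonneg _) (norm_nonneg _)]
  nlinarith [mul_nonneg (sub_nonneg.2 (pow_le_pow_left₀ (norm_nonneg a) ha 2))
    (sub_nonneg.2 (pow_le_pow_left₀ (norm_nonneg x) hx 2))]

lemma norm_ofReal_mul_sub_eq_norm_sq_sub_conj_mul (hx : ‖x‖ = ρ) :
    ‖(ρ : ℂ) * (a - x)‖ = ‖(ρ : ℂ) ^ 2 - conj x * a‖ := by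
  have := sq_norm_sub_conj_mul_sub_sq_norm_mul_sub a x ρ
  rw [hx, sub_self, mul_zero, sub_eq_zero] at this
  exact ((sq_eq_sq₀ (norm_nonneg _) (norm_nonneg _)).1 this).symm

lemma blaschkeLog_nonneg (ha : ‖a‖ ≤ ρ) (hx : ‖x‖ ≤ ρ) : 0 ≤ blaschkeLog a x ρ := by
  rcases eq_or_ne ((ρ : ℂ) * (a - x)) 0 with h | h
  · simp [blaschkeLog, h]
  rw [blaschkeLog, norm_div]
  exact Real.log_nonneg ((one_le_div (norm_pos_iff.2 h)).2
    (norm_ofReal_mul_sub_le_norm_sq_sub_conj_mul ha hx))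

lemma blaschkeLog_eq_zero_of_norm_eq (hx : ‖x‖ = ρ) : blaschkeLog a x ρ = 0 := by
  rw [blaschkeLog, norm_div, ← norm_ofReal_mul_sub_eq_norm_sq_sub_conj_mul hx]
  simp

lemma norm_sq_sub_conj_mul_pos (hρ : 0 < ρ) (ha : ‖a‖ ≤ ρ) (hx : ‖x‖ ≤ ρ)
    (hxa : x ≠ a) : 0 < ‖(ρ : ℂ) ^ 2 - conj x * a‖ :=
  (norm_pos_iff.2 (mul_ne_zero (ofReal_ne_zero.2 hρ.ne') (sub_ne_zero.2 hxa.symm))).trans_le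
    (norm_ofReal_mul_sub_le_norm_sq_sub_conj_mul ha hx)

lemma blaschkeLog_sub_blaschkeLog (hr : 0 < r) (hrR : r ≤ R) (ha : ‖a‖ ≤ r)
    (hx : ‖x‖ ≤ r) (hxa : x ≠ a) :
    blaschkeLog a x R - blaschkeLog a x r =
      Real.log (r * ‖(R : ℂ) ^ 2 - conj x * a‖ / (R * ‖(r : ℂ) ^ 2 - conj x * a‖)) := by
  have hR : 0 < R := hr.trans_le hrR
  have hm : 0 < ‖a - x‖ := norm_pos_iff.2 (sub_ne_zero.2 hxa.symm)
  have hN := norm_sq_sub_conj_mul_pos hR (ha.trans hrR) (hx.trans hrR) hxa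
  have hD := norm_sq_sub_conj_mul_pos hr ha hx hxa
  rw [blaschkeLog, blaschkeLog, norm_div, norm_div, norm_mul, norm_mul,
    Complex.norm_of_nonneg hR.le, Complex.norm_of_nonneg hr.le,
    ← Real.log_div (by positivity) (by positivity)]
  congr 1
  field_simp

lemma le_blaschkeLog_sub_blaschkeLog (ha : ‖a‖ < r) (hrR : r < R)
    (hx : ‖x‖ ≤ r) (hxa : x ≠ a) :
    (R - r) * (R - ‖a‖) / (R ^ 2 + r * ‖a‖) ≤ blaschkeLog a x R - blaschkeLog a x r := by
  have hr : 0 < r := (norm_nonneg a).trans_lt ha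
  have hR : 0 < R := hr.trans hrR
  rw [blaschkeLog_sub_blaschkeLog hr hrR.le ha.le hx hxa]
  have hN := norm_sq_sub_conj_mul_pos hR (ha.trans hrR).le (hx.trans hrR.le) hxa
  have hD := norm_sq_sub_conj_mul_pos hr ha.le hx hxa
  set c := conj x * a
  set N := ‖(R : ℂ) ^ 2 - c‖
  set D := ‖(r : ℂ) ^ 2 - c‖
  set s := ‖c‖
  have hs0 : 0 ≤ s := norm_nonneg c
  have hs : s ≤ r * ‖a‖ := by
    rw [show s = ‖x‖ * ‖a‖ by simp [s, c]]
    exact mul_le_mul_of_nonneg_right hx (norm_nonneg a)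
  have hsr : s ≤ r ^ 2 := hs.trans (by nlinarith [norm_nonneg a])
  have hcross : D * (R ^ 2 + s) ≤ N * (r ^ 2 + s) := by
    have := norm_ofReal_sub_mul_le_norm_ofReal_sub_mul c (sq_nonneg r)
      (pow_le_pow_left₀ hr.le hrR.le 2) (show s ^ 2 ≤ r ^ 2 * R ^ 2 by
        nlinarith [pow_le_pow_left₀ hs0 hsr 2, pow_le_pow_left₀ hr.le hrR.le 2])
    push_cast at this
    exact this
  have hRs : 0 < R ^ 2 + s := by positivity
  calc (R - r) * (R - ‖a‖) / (R ^ 2 + r * ‖a‖)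
      ≤ (R - r) * (r * R - s) / (r * (R ^ 2 + s)) := by
        rw [div_le_div_iff₀ (by positivity) (by positivity)]
        nlinarith [mul_nonneg (mul_nonneg (sub_nonneg.2 hrR.le) (sub_nonneg.2 hs))
          (by positivity : 0 ≤ R * (R + r))]
    _ = 1 - R * (r ^ 2 + s) / (r * (R ^ 2 + s)) := by field_simp; ring
    _ ≤ 1 - R * D / (r * N) := by
        gcongr 1 - ?_
        rw [div_le_div_iff₀ (by positivity) (by positivity)]
        nlinarith [mul_le_mul_of_nonneg_left hcross (mul_pos hR hr).le]
    _ = 1 - (r * N / (R * D))⁻¹ := by rw [inv_div]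
    _ ≤ Real.log (r * N / (R * D)) := Real.one_sub_inv_le_log_of_pos (by positivity)

end BlaschkeFactor

lemma modCounting_eq_sum_blaschkeLog (b : Multiset ℂ) (a : ℂ) (ρ : ℝ) :
    modCounting b a ρ = ((b.filter fun x => ‖x‖ < ρ).map (blaschkeLog a · ρ)).sum :=
  rfl

lemma modCounting_eq_sum_filter_norm_le (b : Multiset ℂ) (a : ℂ) (ρ : ℝ) :
    modCounting b a ρ = ((b.filter fun x => ‖x‖ ≤ ρ).map (blaschkeLog a · ρ)).sum := by
  have hlt : (b.filter fun x => ‖x‖ ≤ ρ).filter (fun x => ‖x‖ < ρ) =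
      b.filter fun x => ‖x‖ < ρ := by
    rw [Multiset.filter_filter]
    exact Multiset.filter_congr fun x _ => ⟨fun h => h.1, fun h => ⟨h, h.le⟩⟩
  have hsphere : (((b.filter fun x => ‖x‖ ≤ ρ).filter fun x => ¬‖x‖ < ρ).map
      (blaschkeLog a · ρ)).sum = 0 := by
    refine Multiset.sum_eq_zero fun y hy => ?_
    obtain ⟨x, hx, rfl⟩ := Multiset.mem_map.1 hy
    simp only [Multiset.mem_filter] at hx
    exact blaschkeLog_eq_zero_of_norm_eq (le_antisymm hx.1.2 (not_lt.1 hx.2))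
  rw [← Multiset.filter_add_not (fun x => ‖x‖ < ρ) (b.filter fun x => ‖x‖ ≤ ρ),
    Multiset.map_add, Multiset.sum_add, hsphere, add_zero, hlt, modCounting_eq_sum_blaschkeLog]

lemma sum_filter_norm_le_le_modCounting (b : Multiset ℂ) {a : ℂ} {r R : ℝ} (ha : ‖a‖ ≤ R)
    (hrR : r < R) :
    ((b.filter fun x => ‖x‖ ≤ r).map (blaschkeLog a · R)).sum ≤ modCounting b a R := by
  have hle : (b.filter fun x => ‖x‖ ≤ r) ≤ b.filter fun x => ‖x‖ < R :=
    Multiset.monotone_filter_right b fun _ hx => hx.trans_lt hrR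
  obtain ⟨t, ht⟩ := Multiset.le_iff_exists_add.1 hle
  have ht_nonneg : 0 ≤ (t.map (blaschkeLog a · R)).sum := by
    refine Multiset.sum_nonneg fun y hy => ?_
    obtain ⟨x, hx, rfl⟩ := Multiset.mem_map.1 hy
    have hxR : x ∈ b.filter fun x => ‖x‖ < R := ht ▸ Multiset.mem_add.2 (Or.inr hx)
    exact blaschkeLog_nonneg ha (Multiset.mem_filter.1 hxR).2.le
  rw [modCounting_eq_sum_blaschkeLog, ht, Multiset.map_add, Multiset.sum_add]
  exact le_add_of_nonneg_right ht_nonneg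

theorem stmt_18_general (P : Multiset ℂ) (a : ℂ) (haP : a ∉ P)
    (r R : ℝ) (har : ‖a‖ < r) (hrR : r < R) :
    ((P.filter fun x => ‖x‖ ≤ r).card : ℝ) *
        ((R - r) * (R - ‖a‖) / (R ^ 2 + r * ‖a‖)) ≤
      modCounting P a R - modCounting P a r := by
  set Q := P.filter fun x => ‖x‖ ≤ r
  have hQ : Q.card • ((R - r) * (R - ‖a‖) / (R ^ 2 + r * ‖a‖)) ≤
      (Q.map fun x => blaschkeLog a x R - blaschkeLog a x r).sum := by
    simpa using Multiset.card_nsmul_le_sum <| Multiset.forall_mem_map_iff.2 fun x hx =>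
      le_blaschkeLog_sub_blaschkeLog har hrR (Multiset.mem_filter.1 hx).2
        fun hxa => haP (hxa ▸ (Multiset.mem_filter.1 hx).1)
  rw [nsmul_eq_mul, Multiset.sum_map_sub] at hQ
  rw [modCounting_eq_sum_filter_norm_le P a r]
  linarith [sum_filter_norm_le_le_modCounting P (har.trans hrR).le hrR]

/-- For `|α| < r < R < R₀` and `f` meromorphic on `Δ(0, R₀)` with pole multiset `P`,
`n(r,f)·(R-r)(R-|α|)/(R² + r|α|) ≤ N_α(R, f) - N_α(r, f)`, where `n(r,f)` counts the poles
of `f` in the closed disk of radius `r` with multiplicity. -/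
theorem stmt_18 (R₀ : ℝ) (hR₀ : 0 < R₀) (f : ℂ → ℂ)
    (hf : MeromorphicOn f (Metric.ball 0 R₀))
    (P : Multiset ℂ)
    (hPmem : ∀ x ∈ P, x ∈ Metric.ball (0 : ℂ) R₀)
    (hP : ∀ z ∈ Metric.ball (0 : ℂ) R₀, ∀ h : MeromorphicAt f z, ∀ q : ℤ,
      meromorphicOrderAt f z = (q : WithTop ℤ) → P.count z = if q < 0 then (-q).toNat else 0)
    (a : ℂ) (ha : a ∈ Metric.ball (0 : ℂ) R₀) (haP : a ∉ P)
    (r R : ℝ) (har : ‖a‖ < r) (hrR : r < R) (hRR₀ : R < R₀) :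
    ((P.filter fun x => ‖x‖ ≤ r).card : ℝ) *
        ((R - r) * (R - ‖a‖) / (R ^ 2 + r * ‖a‖)) ≤
      modCounting P a R - modCounting P a r :=
  stmt_18_general P a haP r R har hrR
end
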